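/- Let G and H be finite simple graphs such that G is connected, and let φ : V(H) → V(G) be an injective map such that the superposition F = G ⊕_φ H is edge 2-connected. Let X be a vertex cover of H with |X| = t ≥ 1. Then there exists a set Y ⊆ V(H) \ X with |Y| ≤ 2(t−1) such that, setting H' = H[X ∪ Y] (the subgraph of H induced by X ∪ Y) and ψ = φ restricted to X ∪ Y, all vertices of ψ(X ∪ Y) lie in the same biconnected component of the superposition F' = G ⊕_ψ H'. -/

import Mathlib

open SimpleGraph

/-- The superposition `G ⊕_φ H` of `G` and `H` with respect to an injective map
`φ : V(H) ↪ V(G)`. -/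
def superpose {α β : Type*} (G : SimpleGraph α) (H : SimpleGraph β) (φ : β ↪ α) :
    SimpleGraph α :=
  G ⊔ SimpleGraph.map φ H

/-- The subgraph of `H` consisting of the edges of the induced subgraph `H[s]`
(on the same vertex type). -/
def restrict {β : Type*} (H : SimpleGraph β) (s : Set β) : SimpleGraph β where
  Adj x y := x ∈ s ∧ y ∈ s ∧ H.Adj x y
  symm := ⟨fun x y h => ⟨h.2.1, h.1, h.2.2.symm⟩⟩
  loopless := ⟨fun x h => H.loopless.irrefl x h.2.2⟩

/-- A graph is edge 2-connected if it is connected and has no bridge. -/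
def TwoEdgeConnected {α : Type*} (G : SimpleGraph α) : Prop :=
  G.Connected ∧ ∀ e : Sym2 α, ¬ G.IsBridge e

/-- The graph obtained from `G` by deleting all its bridges; its connected
components are the biconnected components of `G`. -/
def bicompGraph {α : Type*} (G : SimpleGraph α) : SimpleGraph α :=
  G.deleteEdges {e | G.IsBridge e}

/-
Write `𝒦 Z` for `G ⊕ H[Z]`. It is connected because `G` is, so two of its vertices lie in the
same biconnected component iff no bridge separates them. Starting from `Y = ∅`, we add at most
two vertices of `V(H) \ (X ∪ Y)` at a time so that two biconnected components of `𝒦 (X ∪ Y)`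
meeting `φ(X)` merge, while every vertex of `Y` stays in the component of a vertex of `φ(X)`;
`t - 1` such steps suffice.

For one step, take a bridge `ab` whose `a`-side splits `φ(X)` and is smallest possible: then
`φ(X)` meets that side only inside the component of `a`. As `F` is bridgeless and `X` covers `H`,
some edge `xw` of `H` with `x ∈ X`, `w ∉ X ∪ Y` crosses `ab`. If `φ(x)` lies beyond `ab`, adding
`w` merges `φ(x)` with `a`. Otherwise fix `z ∈ φ(X)` beyond `ab` and, among the edges `xw` of
`H` leaving the component of `a` to a new vertex, choose one crossing a bridge `f` that separates
`a` from `z` with the `a`-side of `f` as large as possible. Adding `w` merges `a` with `z`, unless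
some bridge separating `a` from `z` keeps `φ(w)` on the side of `a`; let `f'` be the smallest
one. If adding `w` kills `f'`, then `w` has a neighbour in `X ∪ Y` beyond `f'` and that
neighbour's component merges with `a`. Otherwise `F` yields another edge `x₂w₂` crossing `f'`;
by the maximal choice `φ(x₂)` is not in the component of `a`, and adding `w₂` as well merges
them.
-/

namespace SimpleGraph

variable {α : Type*} {K K' F : SimpleGraph α} {e f g : Sym2 α}
  {a b c d p q u v u₁ v₁ u₂ v₂ x y z : α}

def side (K : SimpleGraph α) (e : Sym2 α) (v : α) : Set α :=
  {x | (K.deleteEdges {e}).Reachable v x}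

@[simp] lemma mem_side_self : v ∈ K.side e v := Reachable.refl v

lemma mem_side_comm : x ∈ K.side e v ↔ v ∈ K.side e x := reachable_comm

lemma side_eq_of_mem (h : x ∈ K.side e v) : K.side e x = K.side e v :=
  Set.ext fun _ => ⟨h.trans, h.symm.trans⟩

lemma Adj.mem_side (h : K.Adj u v) (he : s(u, v) ≠ e) : v ∈ K.side e u :=
  (deleteEdges_adj.mpr ⟨h, he⟩).reachable

lemma side_mono (h : K ≤ K') : K.side e v ⊆ K'.side e v :=
  fun _ hx => hx.mono (deleteEdges_mono h)

lemma IsBridge.not_and_mem_side (h : K.IsBridge s(c, d)) :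
    ¬ (c ∈ K.side s(c, d) a ∧ d ∈ K.side s(c, d) a) :=
  fun ⟨hc, hd⟩ => h (hc.symm.trans hd)

lemma mem_side_or_mem_side (hK : K.Preconnected) (u v x : α) :
    x ∈ K.side s(u, v) u ∨ x ∈ K.side s(u, v) v := by
  set T := K.side s(u, v) u ∪ K.side s(u, v) v
  by_contra hx
  obtain ⟨W⟩ := hK u x
  obtain ⟨⟨⟨y, y'⟩, hyy'⟩, -, hy, hy'⟩ := W.exists_boundary_dart T (Or.inl mem_side_self) hx
  by_cases he : s(y, y') = s(u, v)
  · rcases Sym2.eq_iff.mp he with ⟨-, rfl⟩ | ⟨-, rfl⟩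
    exacts [hy' (Or.inr mem_side_self), hy' (Or.inl mem_side_self)]
  · have := hyy'.mem_side he
    rcases hy with hy | hy
    exacts [hy' (Or.inl (hy.trans this)), hy' (Or.inr (hy.trans this))]

lemma mem_side_iff_notMem_side (hK : K.Preconnected) (hxy : y ∉ K.side e x) :
    z ∈ K.side e y ↔ z ∉ K.side e x := by
  refine ⟨fun hy hx => hxy (hx.trans hy.symm), fun hz => ?_⟩
  obtain ⟨u, v⟩ := e
  have hside := mem_side_or_mem_side hK u v
  rcases hside x with hx | hx <;> rcases hside y with hy | hy <;> rcases hside z with hz' | hz' <;>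
    first
    | exact hy.symm.trans hz'
    | exact (hz (hx.symm.trans hz')).elim
    | exact (hxy (hx.symm.trans hy)).elim

lemma side_subset_side (hd : d ∉ K.side e a) : K.side e a ⊆ K.side s(c, d) a := by
  classical
  rintro y ⟨W⟩
  refine reachable_deleteEdges_iff_exists_walk.mpr ⟨W.mapLe (deleteEdges_le _), fun hW => hd ?_⟩
  rw [Walk.edges_mapLe_eq_edges] at hW
  exact ⟨W.takeUntil d (W.snd_mem_support_of_mem_edges hW)⟩

lemma compl_side_subset_side (hK : K.Preconnected) (hd : d ∈ K.side e a) (hy : y ∉ K.side e a) :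
    (K.side e a)ᶜ ⊆ K.side s(c, d) y := by
  intro x hx
  have hdy : d ∉ K.side e y := fun h => hy (hd.trans h.symm)
  exact side_subset_side hdy ((mem_side_iff_notMem_side hK hy).mpr hx)

lemma side_subset_side_of_not_and (h : ¬ (c ∈ K.side e a ∧ d ∈ K.side e a)) :
    K.side e a ⊆ K.side s(c, d) a := by
  rcases not_and_or.mp h with hc | hd
  · rw [Sym2.eq_swap]; exact side_subset_side hc
  · exact side_subset_side hd

lemma IsBridge.adj (hK : K.Preconnected) (he : K.IsBridge s(u, v)) : K.Adj u v :=
  he.reachable_iff_adj.mp (hK u v)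

lemma bicompGraph_le_deleteEdges (he : K.IsBridge e) : bicompGraph K ≤ K.deleteEdges {e} :=
  deleteEdges_anti (Set.singleton_subset_iff.mpr he)

lemma mem_side_of_reachable_bicompGraph (h : (bicompGraph K).Reachable p q) (he : K.IsBridge e) :
    q ∈ K.side e p :=
  h.mono (bicompGraph_le_deleteEdges he)

lemma bicompGraph_mono (h : K ≤ K') : bicompGraph K ≤ bicompGraph K' := fun _ _ huv =>
  deleteEdges_adj.mpr
    ⟨h (deleteEdges_adj.mp huv).1, fun hb => (deleteEdges_adj.mp huv).2 (hb.anti h)⟩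

lemma reachable_bicompGraph_of_forall_mem_side (hpq : K.Reachable p q)
    (h : ∀ e, K.IsBridge e → q ∈ K.side e p) : (bicompGraph K).Reachable p q := by
  classical
  obtain ⟨W⟩ := hpq
  induction hn : W.length using Nat.strong_induction_on generalizing p with
  | _ n ih =>
    cases W with
    | nil => exact Reachable.refl _
    | @cons _ v _ hadj W' =>
      by_cases hb : K.IsBridge s(p, v)
      · -- the walk has to cross the bridge back, so it returns to `p` and can be shortened
        have hp : p ∈ W'.support := by
          by_contra hp
          have : q ∈ K.side s(p, v) v :=
            ⟨W'.toDeleteEdge s(p, v) fun h => hp (W'.fst_mem_support_of_mem_edges h)⟩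
          exact hb ((h _ hb).trans this.symm)
        refine ih _ ?_ h (W'.dropUntil p hp) rfl
        have := W'.length_dropUntil_le_length hp
        simp only [Walk.length_cons] at hn
        omega
      · have hpv : (bicompGraph K).Adj p v := deleteEdges_adj.mpr ⟨hadj, hb⟩
        refine hpv.reachable.trans (ih W'.length (by simp [← hn]) (fun e he => ?_) W' rfl)
        rw [side_eq_of_mem (mem_side_of_reachable_bicompGraph hpv.reachable he)]
        exact h e he

lemma bicompGraph_adj_of_not_adj (hle : K ≤ K') (hK : K.Preconnected) (h' : K'.Adj u v)
    (h : ¬ K.Adj u v) : (bicompGraph K').Adj u v :=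
  deleteEdges_adj.mpr ⟨h', fun hb => h ((IsBridge.anti hle hb).adj hK)⟩

lemma not_isBridge_of_crossing (hle : K ≤ K') (hK : K.Preconnected) (huv : K'.Adj u v)
    (hne : s(u, v) ≠ e) (hcross : v ∉ K.side e u) : ¬ K'.IsBridge e := by
  obtain ⟨c, d⟩ := e
  intro hb
  have hdc : d ∉ K.side s(c, d) c := hb.anti hle
  have hcd : c ∉ K.side s(c, d) d := fun h => hdc (mem_side_comm.mp h)
  have joined : ∀ {u v}, K'.Adj u v → s(u, v) ≠ s(c, d) → u ∈ K.side s(c, d) c →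
      v ∈ K.side s(c, d) d → False := fun huv hne hu hv =>
    hb ((side_mono hle hu).trans ((huv.mem_side hne).trans (side_mono hle hv).symm))
  rcases mem_side_or_mem_side hK c d u with hu | hu
  · exact joined huv hne hu
      ((mem_side_iff_notMem_side hK hdc).mpr fun hv => hcross (hu.symm.trans hv))
  · exact joined huv.symm (by rwa [Sym2.eq_swap])
      ((mem_side_iff_notMem_side hK hcd).mpr fun hv => hcross (hu.symm.trans hv)) hu

lemma side_eq_of_isBridge (hle : K ≤ K') (hK : K.Preconnected) (he' : K'.IsBridge e) :
    K'.side e p = K.side e p := by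
  refine Set.Subset.antisymm (fun x hx => ?_) (side_mono hle)
  by_contra hxK
  obtain ⟨W⟩ := hx
  obtain ⟨⟨⟨y, y'⟩, hyy'⟩, -, hy, hy'⟩ := W.exists_boundary_dart (K.side e p) mem_side_self hxK
  rw [deleteEdges_adj] at hyy'
  exact not_isBridge_of_crossing hle hK hyy'.1 hyy'.2 (fun h => hy' (hy.trans h)) he'

lemma reachable_bicompGraph_of_forall_crossing (hle : K ≤ K') (hK : K.Preconnected)
    (h : ∀ e, K.IsBridge e → q ∉ K.side e p →
      ∃ u v, K'.Adj u v ∧ ¬ K.Adj u v ∧ v ∉ K.side e u) :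
    (bicompGraph K').Reachable p q := by
  refine reachable_bicompGraph_of_forall_mem_side ((hK p q).mono hle) fun e he' => ?_
  rw [side_eq_of_isBridge hle hK he']
  by_contra hq
  obtain ⟨u, v, huv', huv, hcross⟩ := h e (he'.anti hle) hq
  refine not_isBridge_of_crossing hle hK huv' ?_ hcross he'
  rintro rfl
  exact huv ((he'.anti hle).adj hK)

lemma exists_crossing_of_not_isBridge (hF : ¬ F.IsBridge e) (he : K.IsBridge e) :
    ∃ u v, F.Adj u v ∧ ¬ K.Adj u v ∧ v ∉ K.side e u := by
  obtain ⟨c, d⟩ := e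
  obtain ⟨W⟩ := not_not.mp hF
  obtain ⟨⟨⟨u, v⟩, huv⟩, -, hu, hv⟩ := W.exists_boundary_dart (K.side s(c, d) c) mem_side_self he
  rw [deleteEdges_adj] at huv
  rw [← side_eq_of_mem hu] at hv
  exact ⟨u, v, huv.1, fun h => hv (h.mem_side huv.2), hv⟩

lemma ncard_image_connectedComponentMk_lt (hle : K ≤ K') {s : Set α} (hs : s.Finite)
    (hp : p ∈ s) (hq : q ∈ s) (hold : ¬ K.Reachable p q) (hnew : K'.Reachable p q) :
    (K'.connectedComponentMk '' s).ncard < (K.connectedComponentMk '' s).ncard := by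
  have himg : K'.connectedComponentMk '' s =
      ConnectedComponent.map (Hom.ofLE hle) '' (K.connectedComponentMk '' s) := by
    rw [Set.image_image]; rfl
  rw [himg]
  refine lt_of_le_of_ne (Set.ncard_image_le (hs.image _)) fun heq => hold ?_
  exact ConnectedComponent.eq.mp (Set.injOn_of_ncard_image_eq heq (hs.image _) ⟨p, hp, rfl⟩
    ⟨q, hq, rfl⟩ (ConnectedComponent.eq.mpr hnew))

lemma compl_side_subset_side_of_mem (hK : K.Preconnected) (hab : K.IsBridge s(a, b))
    (hc : c ∈ K.side s(a, b) a) (hd : d ∈ K.side s(a, b) a) :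
    (K.side s(a, b) a)ᶜ ⊆ K.side s(c, d) a := by
  intro y hy
  have hne : s(a, b) ≠ s(c, d) := by
    rintro h
    rw [h] at hab hc hd
    exact hab.not_and_mem_side ⟨hc, hd⟩
  exact ((hab.adj hK).mem_side hne).trans (compl_side_subset_side hK hd hab hy)

lemma side_subset_side_or_side_subset_side (hK : K.Preconnected) (hzf : z ∉ K.side f a)
    (hzg : z ∉ K.side g a) : K.side f a ⊆ K.side g a ∨ K.side g a ⊆ K.side f a := by
  obtain ⟨c, d⟩ := g
  by_cases hd : d ∈ K.side f a
  · exact Or.inr fun y hy => by_contra fun hyf =>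
      hzg (hy.trans (compl_side_subset_side hK hd hzf hyf).symm)
  · exact Or.inl (side_subset_side hd)

lemma exists_side_eq_side (hK : K.Preconnected) (e : Sym2 α) (v : α) :
    ∃ a b, e = s(a, b) ∧ K.side e v = K.side e a := by
  obtain ⟨c, d⟩ := e
  rcases mem_side_or_mem_side hK c d v with h | h
  · exact ⟨c, d, rfl, side_eq_of_mem h⟩
  · exact ⟨d, c, Sym2.eq_swap, side_eq_of_mem h⟩

lemma exists_leaf_side [Finite α] (hK : K.Preconnected) {M : Set α} {p q : α} (hp : p ∈ M)
    (hq : q ∈ M) (hpq : ¬ (bicompGraph K).Reachable p q) :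
    ∃ a b, K.IsBridge s(a, b) ∧ (∃ m ∈ M, m ∈ K.side s(a, b) a) ∧
      (∃ z ∈ M, z ∉ K.side s(a, b) a) ∧
      ∀ m ∈ M, m ∈ K.side s(a, b) a → (bicompGraph K).Reachable a m := by
  set 𝒮 : Set (Set α) :=
    {S | ∃ e v, K.IsBridge e ∧ S = K.side e v ∧ (∃ m ∈ M, m ∈ S) ∧ ∃ z ∈ M, z ∉ S}
  have hne : 𝒮.Nonempty := by
    obtain ⟨e, he, hqe⟩ : ∃ e, K.IsBridge e ∧ q ∉ K.side e p := by
      by_contra! h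
      exact hpq (reachable_bicompGraph_of_forall_mem_side (hK p q) h)
    exact ⟨_, e, p, he, rfl, ⟨p, hp, mem_side_self⟩, q, hq, hqe⟩
  obtain ⟨S, ⟨e, v, he, rfl, hmS, hzS⟩, hmin⟩ :=
    Set.exists_min_image 𝒮 Set.ncard (Set.toFinite _) hne
  obtain ⟨a, b, rfl, hS⟩ := exists_side_eq_side hK e v
  rw [hS] at hmS hzS hmin
  refine ⟨a, b, he, hmS, hzS, fun m hm hma => ?_⟩
  refine reachable_bicompGraph_of_forall_mem_side (hK a m) fun g hg => by_contra fun hmg => ?_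
  obtain ⟨c, d⟩ := g
  by_cases hcd : c ∈ K.side s(a, b) a ∧ d ∈ K.side s(a, b) a
  · -- then the side of `g` containing `m` is a smaller side splitting `M`
    obtain ⟨z, hz, hza⟩ := hzS
    have hsub : K.side s(c, d) m ⊂ K.side s(a, b) a :=
      ⟨fun y hy => by_contra fun hya =>
          hmg ((compl_side_subset_side_of_mem hK he hcd.1 hcd.2 hya).trans hy.symm),
        fun h => hmg (mem_side_comm.mp (h mem_side_self))⟩
    have := hmin _ ⟨s(c, d), m, hg, rfl, ⟨m, hm, mem_side_self⟩, z, hz, fun h => hza (hsub.1 h)⟩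
    exact (Set.ncard_lt_ncard hsub (Set.toFinite _)).not_ge this
  · exact hmg (side_subset_side_of_not_and hcd hma)

lemma reachable_bicompGraph_of_adj_of_mem_side (hle : K ≤ K') (hK : K.Preconnected)
    (hab : K.IsBridge s(a, b)) (huv : K'.Adj u v) (hnuv : ¬ K.Adj u v)
    (hv : v ∈ K.side s(a, b) a) (hu : u ∉ K.side s(a, b) a) : (bicompGraph K').Reachable a u := by
  refine reachable_bicompGraph_of_forall_crossing hle hK fun g hg hug =>
    ⟨v, u, huv.symm, fun h => hnuv h.symm, fun hvu => ?_⟩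
  obtain ⟨c, d⟩ := g
  by_cases hcd : c ∈ K.side s(a, b) a ∧ d ∈ K.side s(a, b) a
  · exact hug (compl_side_subset_side_of_mem hK hab hcd.1 hcd.2 hu)
  · exact hug ((side_subset_side_of_not_and hcd hv).trans hvu)

lemma reachable_bicompGraph_of_adj_of_minimal [Finite α] (hle : K ≤ K') (hK : K.Preconnected)
    (hzf : z ∉ K.side f a)
    (hmin : ∀ g, K.IsBridge g → z ∉ K.side g a → v₁ ∈ K.side g a →
      (K.side f a).ncard ≤ (K.side g a).ncard)
    (hu₁ : (bicompGraph K).Reachable a u₁) (h₁ : K'.Adj u₁ v₁) (h₁' : ¬ K.Adj u₁ v₁)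
    (h₂ : K'.Adj u₂ v₂) (h₂' : ¬ K.Adj u₂ v₂) (hu₂ : u₂ ∈ K.side f a) (hv₂ : v₂ ∉ K.side f a) :
    (bicompGraph K').Reachable a v₂ := by
  -- A bridge `g` separating `a` from `v₂` outside the `a`-side of `f` is crossed by `u₂v₂`. One
  -- inside it separates `a` from `z`, so by minimality of `f` it is crossed by `u₁v₁`.
  refine reachable_bicompGraph_of_forall_crossing hle hK fun g hg hv₂g => ?_
  obtain ⟨c, d⟩ := g
  by_cases hcd : c ∈ K.side f a ∧ d ∈ K.side f a
  · have hzg : z ∉ K.side s(c, d) a := fun h =>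
      hv₂g (h.trans (compl_side_subset_side hK hcd.2 hzf hv₂))
    have hu₁g : u₁ ∈ K.side s(c, d) a := mem_side_of_reachable_bicompGraph hu₁ hg
    by_cases hv₁g : v₁ ∈ K.side s(c, d) a
    · exfalso
      have hfg : K.side f a ⊆ K.side s(c, d) a := by
        rcases side_subset_side_or_side_subset_side hK hzf hzg with h | h
        · exact h
        · exact (Set.eq_of_subset_of_ncard_le h (hmin _ hg hzg hv₁g) (Set.toFinite _)).ge
      exact hg.not_and_mem_side ⟨hfg hcd.1, hfg hcd.2⟩
    · exact ⟨u₁, v₁, h₁, h₁', by rwa [side_eq_of_mem hu₁g]⟩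
  · exact ⟨u₂, v₂, h₂, h₂', by rwa [side_eq_of_mem (side_subset_side_of_not_and hcd hu₂)]⟩

end SimpleGraph

section Superposition

variable {α β : Type*} {G : SimpleGraph α} {H : SimpleGraph β} {φ : β ↪ α} {Z Z' : Set β}
  {X : Finset β} {e : Sym2 α} {u v : α} {x w : β}

lemma superpose_adj_iff {H : SimpleGraph β} :
    (superpose G H φ).Adj u v ↔ G.Adj u v ∨ ∃ x y, H.Adj x y ∧ φ x = u ∧ φ y = v := by
  rw [superpose, sup_adj, map_adj]

lemma superpose_restrict_mono (h : Z ⊆ Z') :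
    superpose G (restrict H Z) φ ≤ superpose G (restrict H Z') φ :=
  sup_le_sup_left (map_monotone φ fun _ _ (hxy : (restrict H Z).Adj _ _) =>
    show (restrict H Z').Adj _ _ from ⟨h hxy.1, h hxy.2.1, hxy.2.2⟩) G

lemma preconnected_superpose (hG : G.Connected) : (superpose G (restrict H Z) φ).Preconnected :=
  (hG.mono le_sup_left).preconnected

lemma superpose_restrict_adj (hx : x ∈ Z) (hw : w ∈ Z) (h : H.Adj x w) :
    (superpose G (restrict H Z) φ).Adj (φ x) (φ w) :=
  Or.inr (map_adj_apply.mpr ⟨hx, hw, h⟩)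

lemma exists_adj_of_adj_superpose_insert (h : (superpose G (restrict H (insert w Z)) φ).Adj u v)
    (hZ : ¬ (superpose G (restrict H Z) φ).Adj u v) :
    ∃ y ∈ Z, H.Adj w y ∧ ((u = φ w ∧ v = φ y) ∨ (u = φ y ∧ v = φ w)) := by
  rcases superpose_adj_iff.mp h with h | ⟨x, y, ⟨hx, hy, hxy⟩, rfl, rfl⟩
  · exact (hZ (Or.inl h)).elim
  have hout : ¬ (x ∈ Z ∧ y ∈ Z) := fun h => hZ (superpose_restrict_adj h.1 h.2 hxy)
  rcases hx with rfl | hx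
  · refine ⟨y, ?_, hxy, Or.inl ⟨rfl, rfl⟩⟩
    rcases hy with rfl | hy
    exacts [(H.loopless.irrefl _ hxy).elim, hy]
  · rcases hy with rfl | hy
    exacts [⟨x, hx, hxy.symm, Or.inr ⟨rfl, rfl⟩⟩, (hout ⟨hx, hy⟩).elim]

lemma exists_crossing_superpose (hF : TwoEdgeConnected (superpose G H φ))
    (hX : ∀ x y : β, H.Adj x y → x ∈ X ∨ y ∈ X) (hXZ : ↑X ⊆ Z)
    (he : (superpose G (restrict H Z) φ).IsBridge e) :
    ∃ x ∈ X, ∃ w ∉ Z, H.Adj x w ∧ ¬ (superpose G (restrict H Z) φ).Adj (φ x) (φ w) ∧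
      φ w ∉ (superpose G (restrict H Z) φ).side e (φ x) := by
  obtain ⟨u, v, huv, hnuv, hcross⟩ := exists_crossing_of_not_isBridge (hF.2 e) he
  rcases superpose_adj_iff.mp huv with huv | ⟨x, y, hxy, rfl, rfl⟩
  · exact (hnuv (Or.inl huv)).elim
  have hout : ¬ (x ∈ Z ∧ y ∈ Z) := fun h => hnuv (superpose_restrict_adj h.1 h.2 hxy)
  rcases hX x y hxy with hx | hy
  · exact ⟨x, hx, y, fun hy => hout ⟨hXZ hx, hy⟩, hxy, hnuv, hcross⟩
  · exact ⟨y, hy, x, fun hx => hout ⟨hx, hXZ hy⟩, hxy.symm, fun h => hnuv h.symm,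
      fun h => hcross (mem_side_comm.mp h)⟩

end Superposition

section Step

variable {α β : Type*} [DecidableEq β] {G : SimpleGraph α} {H : SimpleGraph β}
  {φ : β ↪ α} {X Y : Finset β} {a : α} {xs vs : β}

local notation "𝒦" Z:max => superpose G (restrict H ↑Z) φ

variable (G H φ X) in
def IsAttached (Y : Finset β) : Prop :=
  ∀ y ∈ Y, ∃ x ∈ X, (bicompGraph (𝒦 (X ∪ Y))).Reachable (φ x) (φ y)

variable (G H φ X) in
def CanMerge (Y : Finset β) : Prop :=
  ∃ Y' : Finset β, Disjoint Y' X ∧ Y'.card ≤ Y.card + 2 ∧ IsAttached G H φ X Y' ∧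
    ((bicompGraph (𝒦 (X ∪ Y'))).connectedComponentMk '' (φ '' X)).ncard <
      ((bicompGraph (𝒦 (X ∪ Y))).connectedComponentMk '' (φ '' X)).ncard

variable (G H φ X Y) in
def IsNewEdgeAt (a : α) (x w : β) : Prop :=
  x ∈ X ∧ w ∉ X ∪ Y ∧ H.Adj x w ∧ ¬ (𝒦 (X ∪ Y)).Adj (φ x) (φ w) ∧
    (bicompGraph (𝒦 (X ∪ Y))).Reachable a (φ x)

lemma superpose_le_insert (w : β) : (𝒦 (X ∪ Y)) ≤ 𝒦 (X ∪ insert w Y) :=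
  superpose_restrict_mono (Finset.coe_subset.mpr
    (Finset.union_subset_union_right (Finset.subset_insert w Y)))

lemma canMerge_of_reachable (hG : G.Connected) (hYX : Disjoint Y X) (hY : IsAttached G H φ X Y)
    {Y' : Finset β} (hYY' : Y ⊆ Y') (hcard : Y'.card ≤ Y.card + 2)
    (hnew : ∀ w ∈ Y', w ∉ Y → w ∉ X ∧ ∃ x ∈ X, H.Adj x w ∧ ¬ (𝒦 (X ∪ Y)).Adj (φ x) (φ w))
    {x₁ x₂ : β} (hx₁ : x₁ ∈ X) (hx₂ : x₂ ∈ X)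
    (hold : ¬ (bicompGraph (𝒦 (X ∪ Y))).Reachable (φ x₁) (φ x₂))
    (hmerge : (bicompGraph (𝒦 (X ∪ Y'))).Reachable (φ x₁) (φ x₂)) : CanMerge G H φ X Y := by
  have hle : (𝒦 (X ∪ Y)) ≤ 𝒦 (X ∪ Y') :=
    superpose_restrict_mono (Finset.coe_subset.mpr (Finset.union_subset_union_right hYY'))
  refine ⟨Y', Finset.disjoint_left.mpr fun w hw hwX => ?_, hcard, fun y hy => ?_,
    ncard_image_connectedComponentMk_lt (bicompGraph_mono hle) (Set.toFinite _)
      ⟨x₁, hx₁, rfl⟩ ⟨x₂, hx₂, rfl⟩ hold hmerge⟩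
  · by_cases hwY : w ∈ Y
    · exact Finset.disjoint_left.mp hYX hwY hwX
    · exact (hnew w hw hwY).1 hwX
  · by_cases hyY : y ∈ Y
    · obtain ⟨x, hx, hxy⟩ := hY y hyY
      exact ⟨x, hx, hxy.mono (bicompGraph_mono hle)⟩
    · obtain ⟨-, x, hx, hxy, hnadj⟩ := hnew y hy hyY
      have hxy' : (𝒦 (X ∪ Y')).Adj (φ x) (φ y) :=
        superpose_restrict_adj (by simp [hx]) (by simp [hy]) hxy
      exact ⟨x, hx,
        (bicompGraph_adj_of_not_adj hle (preconnected_superpose hG) hxy' hnadj).reachable⟩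

lemma canMerge_of_reachable_insert (hG : G.Connected) (hYX : Disjoint Y X)
    (hY : IsAttached G H φ X Y) {x w : β} (hx : x ∈ X) (hw : w ∉ X ∪ Y) (hxw : H.Adj x w)
    (hnadj : ¬ (𝒦 (X ∪ Y)).Adj (φ x) (φ w)) {x₁ x₂ : β} (hx₁ : x₁ ∈ X) (hx₂ : x₂ ∈ X)
    (hold : ¬ (bicompGraph (𝒦 (X ∪ Y))).Reachable (φ x₁) (φ x₂))
    (hmerge : (bicompGraph (𝒦 (X ∪ insert w Y))).Reachable (φ x₁) (φ x₂)) :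
    CanMerge G H φ X Y := by
  refine canMerge_of_reachable hG hYX hY (Finset.subset_insert w Y)
    ((Finset.card_insert_le w Y).trans (by omega)) (fun v hv hvY => ?_) hx₁ hx₂ hold hmerge
  obtain rfl := (Finset.mem_insert.mp hv).resolve_right hvY
  exact ⟨fun h => hw (Finset.mem_union_left _ h), x, hx, hxw, hnadj⟩

lemma canMerge_of_adj_out (hG : G.Connected) (hYX : Disjoint Y X) (hY : IsAttached G H φ X Y)
    {b : α} (hab : (𝒦 (X ∪ Y)).IsBridge s(a, b)) {m : β} (hm : m ∈ X)
    (hma : (bicompGraph (𝒦 (X ∪ Y))).Reachable a (φ m)) {x w : β} (hx : x ∈ X)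
    (hw : w ∉ X ∪ Y) (hxw : H.Adj x w) (hnadj : ¬ (𝒦 (X ∪ Y)).Adj (φ x) (φ w))
    (hwa : φ w ∈ (𝒦 (X ∪ Y)).side s(a, b) a) (hxa : φ x ∉ (𝒦 (X ∪ Y)).side s(a, b) a) :
    CanMerge G H φ X Y := by
  have hle : (𝒦 (X ∪ Y)) ≤ 𝒦 (X ∪ insert w Y) := superpose_le_insert w
  have hxw' : (𝒦 (X ∪ insert w Y)).Adj (φ x) (φ w) :=
    superpose_restrict_adj (by simp [hx]) (by simp) hxw
  refine canMerge_of_reachable_insert hG hYX hY hx hw hxw hnadj hm hx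
    (fun h => hxa (mem_side_of_reachable_bicompGraph (hma.trans h) hab)) ?_
  exact (hma.mono (bicompGraph_mono hle)).symm.trans
    (reachable_bicompGraph_of_adj_of_mem_side hle (preconnected_superpose hG) hab hxw' hnadj
      hwa hxa)

lemma canMerge_of_forall_notMem_side (hG : G.Connected) (hYX : Disjoint Y X)
    (hY : IsAttached G H φ X Y) (hnew : IsNewEdgeAt G H φ X Y a xs vs) {xz : β} (hxz : xz ∈ X)
    (hza : ¬ (bicompGraph (𝒦 (X ∪ Y))).Reachable a (φ xz))
    (hall : ∀ f, (𝒦 (X ∪ Y)).IsBridge f → φ xz ∉ (𝒦 (X ∪ Y)).side f a →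
      φ vs ∉ (𝒦 (X ∪ Y)).side f a) :
    CanMerge G H φ X Y := by
  obtain ⟨hxs, hvs, hxsvs, hnadj, hxsa⟩ := hnew
  have hle : (𝒦 (X ∪ Y)) ≤ 𝒦 (X ∪ insert vs Y) := superpose_le_insert vs
  have hadj : (𝒦 (X ∪ insert vs Y)).Adj (φ xs) (φ vs) :=
    superpose_restrict_adj (by simp [hxs]) (by simp) hxsvs
  have hmerge : (bicompGraph (𝒦 (X ∪ insert vs Y))).Reachable a (φ xz) :=
    reachable_bicompGraph_of_forall_crossing hle (preconnected_superpose hG) fun f hf hzf =>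
      ⟨φ xs, φ vs, hadj, hnadj, by
        rw [side_eq_of_mem (mem_side_of_reachable_bicompGraph hxsa hf)]; exact hall f hf hzf⟩
  exact canMerge_of_reachable_insert hG hYX hY hxs hvs hxsvs hnadj hxs hxz
    (fun h => hza (hxsa.trans h)) ((hxsa.mono (bicompGraph_mono hle)).symm.trans hmerge)

lemma canMerge_of_not_isBridge (hG : G.Connected) (hYX : Disjoint Y X)
    (hY : IsAttached G H φ X Y) (hnew : IsNewEdgeAt G H φ X Y a xs vs) {f : Sym2 α}
    (hf : (𝒦 (X ∪ Y)).IsBridge f) (hvsf : φ vs ∈ (𝒦 (X ∪ Y)).side f a)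
    (hf₁ : ¬ (𝒦 (X ∪ insert vs Y)).IsBridge f) :
    CanMerge G H φ X Y := by
  obtain ⟨hxs, hvs, hxsvs, hnadj, hxsa⟩ := hnew
  have hK : (𝒦 (X ∪ Y)).Preconnected := preconnected_superpose hG
  have hle : (𝒦 (X ∪ Y)) ≤ 𝒦 (X ∪ insert vs Y) := superpose_le_insert vs
  obtain ⟨u, v, huv, hnuv, hcross⟩ := exists_crossing_of_not_isBridge hf₁ hf
  rw [Finset.union_insert, Finset.coe_insert] at huv
  obtain ⟨y, hy, hvsy, hyuv⟩ := exists_adj_of_adj_superpose_insert huv hnuv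
  obtain ⟨hyf, hnadj'⟩ : φ y ∉ (𝒦 (X ∪ Y)).side f a ∧ ¬ (𝒦 (X ∪ Y)).Adj (φ vs) (φ y) := by
    rw [← side_eq_of_mem hvsf]
    rcases hyuv with ⟨rfl, rfl⟩ | ⟨rfl, rfl⟩
    exacts [⟨hcross, hnuv⟩, ⟨fun h => hcross (mem_side_comm.mp h), fun h => hnuv h.symm⟩]
  obtain ⟨m, hm, hmy⟩ : ∃ m ∈ X, (bicompGraph (𝒦 (X ∪ Y))).Reachable (φ m) (φ y) := by
    rcases Finset.mem_union.mp hy with hyX | hyY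
    exacts [⟨y, hyX, Reachable.refl _⟩, hY y hyY]
  have hadj₁ : (𝒦 (X ∪ insert vs Y)).Adj (φ xs) (φ vs) :=
    superpose_restrict_adj (by simp [hxs]) (by simp) hxsvs
  have hadj₂ : (𝒦 (X ∪ insert vs Y)).Adj (φ vs) (φ y) :=
    superpose_restrict_adj (by simp) (by simp_all) hvsy
  refine canMerge_of_reachable_insert hG hYX hY hxs hvs hxsvs hnadj hxs hm
    (fun h => hyf (mem_side_of_reachable_bicompGraph ((hxsa.trans h).trans hmy) hf)) ?_
  exact ((bicompGraph_adj_of_not_adj hle hK hadj₁ hnadj).reachable.trans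
    (bicompGraph_adj_of_not_adj hle hK hadj₂ hnadj').reachable).trans
      (hmy.mono (bicompGraph_mono hle)).symm

lemma canMerge_of_isBridge [Finite α] (hG : G.Connected)
    (hF : TwoEdgeConnected (superpose G H φ)) (hX : ∀ x y : β, H.Adj x y → x ∈ X ∨ y ∈ X)
    (hYX : Disjoint Y X) (hY : IsAttached G H φ X Y)
    (hnew : IsNewEdgeAt G H φ X Y a xs vs) {z : α} {f : Sym2 α}
    (hzf : z ∉ (𝒦 (X ∪ Y)).side f a)
    (hmin : ∀ g, (𝒦 (X ∪ Y)).IsBridge g → z ∉ (𝒦 (X ∪ Y)).side g a →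
      φ vs ∈ (𝒦 (X ∪ Y)).side g a → ((𝒦 (X ∪ Y)).side f a).ncard ≤ ((𝒦 (X ∪ Y)).side g a).ncard)
    (hf₁ : (𝒦 (X ∪ insert vs Y)).IsBridge f)
    (hnocross : ∀ x w, IsNewEdgeAt G H φ X Y a x w → φ w ∈ (𝒦 (X ∪ Y)).side f a) :
    CanMerge G H φ X Y := by
  obtain ⟨hxs, hvs, hxsvs, hnadj, hxsa⟩ := hnew
  have hK : (𝒦 (X ∪ Y)).Preconnected := preconnected_superpose hG
  have hle₁ : (𝒦 (X ∪ Y)) ≤ 𝒦 (X ∪ insert vs Y) := superpose_le_insert vs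
  obtain ⟨x₂, hx₂, w, hw, hx₂w, hnadj₁, hcross⟩ :=
    exists_crossing_superpose hF hX (Finset.coe_subset.mpr Finset.subset_union_left) hf₁
  rw [side_eq_of_isBridge hle₁ hK hf₁] at hcross
  have hw' : w ∉ X ∪ Y := fun h =>
    hw (Finset.union_subset_union_right (Finset.subset_insert vs Y) h)
  have hnadj₂ : ¬ (𝒦 (X ∪ Y)).Adj (φ x₂) (φ w) := fun h => hnadj₁ (hle₁ h)
  have hx₂a : ¬ (bicompGraph (𝒦 (X ∪ Y))).Reachable a (φ x₂) := fun h => hcross (by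
    rw [side_eq_of_mem (mem_side_of_reachable_bicompGraph h (hf₁.anti hle₁))]
    exact hnocross x₂ w ⟨hx₂, hw', hx₂w, hnadj₂, h⟩)
  have hle₂ : (𝒦 (X ∪ Y)) ≤ 𝒦 (X ∪ insert w (insert vs Y)) :=
    hle₁.trans (superpose_le_insert w)
  have hadj₁ : (𝒦 (X ∪ insert w (insert vs Y))).Adj (φ xs) (φ vs) :=
    superpose_restrict_adj (by simp [hxs]) (by simp) hxsvs
  have hadj₂ : (𝒦 (X ∪ insert w (insert vs Y))).Adj (φ x₂) (φ w) :=
    superpose_restrict_adj (by simp [hx₂]) (by simp) hx₂w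
  have hmerge : (bicompGraph (𝒦 (X ∪ insert w (insert vs Y)))).Reachable a (φ x₂) := by
    by_cases hx₂f : φ x₂ ∈ (𝒦 (X ∪ Y)).side f a
    · exact (reachable_bicompGraph_of_adj_of_minimal hle₂ hK hzf hmin hxsa hadj₁ hnadj hadj₂
        hnadj₂ hx₂f (by rwa [side_eq_of_mem hx₂f] at hcross)).trans
        (bicompGraph_adj_of_not_adj hle₂ hK hadj₂ hnadj₂).reachable.symm
    · exact reachable_bicompGraph_of_adj_of_minimal hle₂ hK hzf hmin hxsa hadj₁ hnadj
        hadj₂.symm (fun h => hnadj₂ h.symm)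
        ((mem_side_iff_notMem_side hK fun h => hx₂f (mem_side_comm.mp h)).mpr hcross) hx₂f
  refine canMerge_of_reachable hG hYX hY
    ((Finset.subset_insert vs Y).trans (Finset.subset_insert _ _))
    ((Finset.card_insert_le _ _).trans (by have := Finset.card_insert_le vs Y; omega))
    (fun u hu huY => ?_) hxs hx₂ (fun h => hx₂a (hxsa.trans h))
    ((hxsa.mono (bicompGraph_mono hle₂)).symm.trans hmerge)
  rcases Finset.mem_insert.mp hu with rfl | hu
  · exact ⟨fun h => hw' (Finset.mem_union_left _ h), x₂, hx₂, hx₂w, hnadj₂⟩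
  · obtain rfl := (Finset.mem_insert.mp hu).resolve_right huY
    exact ⟨fun h => hvs (Finset.mem_union_left _ h), xs, hxs, hxsvs, hnadj⟩

lemma canMerge_of_isNewEdgeAt [Finite α] (hG : G.Connected)
    (hF : TwoEdgeConnected (superpose G H φ)) (hX : ∀ x y : β, H.Adj x y → x ∈ X ∨ y ∈ X)
    (hYX : Disjoint Y X) (hY : IsAttached G H φ X Y) {xz : β} (hxz : xz ∈ X)
    (h : ∃ x w g, IsNewEdgeAt G H φ X Y a x w ∧ (𝒦 (X ∪ Y)).IsBridge g ∧
      φ xz ∉ (𝒦 (X ∪ Y)).side g a ∧ φ w ∉ (𝒦 (X ∪ Y)).side g a) :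
    CanMerge G H φ X Y := by
  have hK : (𝒦 (X ∪ Y)).Preconnected := preconnected_superpose hG
  obtain ⟨gs, ⟨xs, vs, hnew, hgs, hzgs, hvsgs⟩, hmax⟩ := Set.exists_max_image
    {g | ∃ x w, IsNewEdgeAt G H φ X Y a x w ∧ (𝒦 (X ∪ Y)).IsBridge g ∧
      φ xz ∉ (𝒦 (X ∪ Y)).side g a ∧ φ w ∉ (𝒦 (X ∪ Y)).side g a}
    (fun g => ((𝒦 (X ∪ Y)).side g a).ncard) (Set.toFinite _)
    (let ⟨x, w, g, hg⟩ := h; ⟨g, x, w, hg⟩)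
  by_cases huncrossed : ∃ f, (𝒦 (X ∪ Y)).IsBridge f ∧ φ xz ∉ (𝒦 (X ∪ Y)).side f a ∧
      φ vs ∈ (𝒦 (X ∪ Y)).side f a
  · obtain ⟨f, ⟨hf, hzf, hvsf⟩, hmin⟩ :=
      Set.exists_min_image _ (fun f => ((𝒦 (X ∪ Y)).side f a).ncard) (Set.toFinite _) huncrossed
    by_cases hf₁ : (𝒦 (X ∪ insert vs Y)).IsBridge f
    · refine canMerge_of_isBridge hG hF hX hYX hY hnew hzf
        (fun g hg hzg hvsg => hmin g ⟨hg, hzg, hvsg⟩) hf₁ fun x w hxw => by_contra fun hwf => ?_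
      -- `x w` would cross `f`, which lies strictly beyond the maximal choice `gs`
      have hle := hmax f ⟨x, w, hxw, hf, hzf, hwf⟩
      rcases side_subset_side_or_side_subset_side hK hzgs hzf with hsub | hsub
      · exact (Set.ncard_lt_ncard ⟨hsub, fun h => hvsgs (h hvsf)⟩ (Set.toFinite _)).not_ge hle
      · exact hvsgs (hsub hvsf)
    · exact canMerge_of_not_isBridge hG hYX hY hnew hf hvsf hf₁
  · push Not at huncrossed
    exact canMerge_of_forall_notMem_side hG hYX hY hnew hxz
      (fun h => hzgs (mem_side_of_reachable_bicompGraph h hgs)) huncrossed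

lemma canMerge_of_not_reachable [Finite α] (hG : G.Connected)
    (hF : TwoEdgeConnected (superpose G H φ)) (hX : ∀ x y : β, H.Adj x y → x ∈ X ∨ y ∈ X)
    (hYX : Disjoint Y X) (hY : IsAttached G H φ X Y) {x₁ x₂ : β} (hx₁ : x₁ ∈ X) (hx₂ : x₂ ∈ X)
    (hsep : ¬ (bicompGraph (𝒦 (X ∪ Y))).Reachable (φ x₁) (φ x₂)) :
    CanMerge G H φ X Y := by
  have hK : (𝒦 (X ∪ Y)).Preconnected := preconnected_superpose hG
  obtain ⟨a, b, hab, ⟨_, ⟨m, hm, rfl⟩, hma⟩, ⟨_, ⟨xz, hxz, rfl⟩, hza⟩, hleaf⟩ :=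
    exists_leaf_side hK (M := φ '' ↑X) ⟨x₁, hx₁, rfl⟩ ⟨x₂, hx₂, rfl⟩ hsep
  obtain ⟨x, hx, w, hw, hxw, hnadj, hcross⟩ :=
    exists_crossing_superpose hF hX (Finset.coe_subset.mpr Finset.subset_union_left) hab
  by_cases hxa : φ x ∈ (𝒦 (X ∪ Y)).side s(a, b) a
  · rw [side_eq_of_mem hxa] at hcross
    exact canMerge_of_isNewEdgeAt hG hF hX hYX hY hxz
      ⟨x, w, s(a, b), ⟨hx, hw, hxw, hnadj, hleaf _ ⟨x, hx, rfl⟩ hxa⟩, hab, hza, hcross⟩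
  · exact canMerge_of_adj_out hG hYX hY hab hm (hleaf _ ⟨m, hm, rfl⟩ hma) hx hw hxw hnadj
      ((mem_side_iff_notMem_side hK fun h => hxa (mem_side_comm.mp h)).mpr hcross) hxa

lemma reachable_of_isAttached (hY : IsAttached G H φ X Y)
    (hXY : ∀ x ∈ X, ∀ x' ∈ X, (bicompGraph (𝒦 (X ∪ Y))).Reachable (φ x) (φ x')) :
    ∀ u ∈ X ∪ Y, ∀ v ∈ X ∪ Y, (bicompGraph (𝒦 (X ∪ Y))).Reachable (φ u) (φ v) := by
  have hattach : ∀ u ∈ X ∪ Y, ∃ x ∈ X, (bicompGraph (𝒦 (X ∪ Y))).Reachable (φ x) (φ u) :=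
    fun u hu => (Finset.mem_union.mp hu).elim (fun hu => ⟨u, hu, Reachable.refl _⟩) (hY u)
  intro u hu v hv
  obtain ⟨x, hx, hxu⟩ := hattach u hu
  obtain ⟨x', hx', hxv⟩ := hattach v hv
  exact (hxu.symm.trans (hXY x hx x' hx')).trans hxv

theorem exists_reachable_of_ncard_le [Finite α] (hG : G.Connected)
    (hF : TwoEdgeConnected (superpose G H φ)) (hX : ∀ x y : β, H.Adj x y → x ∈ X ∨ y ∈ X)
    (n : ℕ) (hYX : Disjoint Y X) (hY : IsAttached G H φ X Y)
    (hn : ((bicompGraph (𝒦 (X ∪ Y))).connectedComponentMk '' (φ '' X)).ncard ≤ n + 1) :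
    ∃ Y' : Finset β, Disjoint Y' X ∧ Y'.card ≤ Y.card + 2 * n ∧
      ∀ u ∈ X ∪ Y', ∀ v ∈ X ∪ Y', (bicompGraph (𝒦 (X ∪ Y'))).Reachable (φ u) (φ v) := by
  induction n generalizing Y with
  | zero =>
    refine ⟨Y, hYX, by omega, reachable_of_isAttached hY fun x hx x' hx' => ?_⟩
    exact ConnectedComponent.eq.mp ((Set.ncard_le_one (Set.toFinite _)).mp hn _
      ⟨_, ⟨x, hx, rfl⟩, rfl⟩ _ ⟨_, ⟨x', hx', rfl⟩, rfl⟩)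
  | succ n ih =>
    by_cases hXY : ∀ x ∈ X, ∀ x' ∈ X, (bicompGraph (𝒦 (X ∪ Y))).Reachable (φ x) (φ x')
    · exact ⟨Y, hYX, by omega, reachable_of_isAttached hY hXY⟩
    push Not at hXY
    obtain ⟨x, hx, x', hx', hsep⟩ := hXY
    obtain ⟨Y₁, hY₁X, hcard, hY₁, hlt⟩ := canMerge_of_not_reachable hG hF hX hYX hY hx hx' hsep
    obtain ⟨Y', hY'X, hcard', hY'⟩ := ih hY₁X hY₁ (by omega)
    exact ⟨Y', hY'X, by omega, hY'⟩

end Step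

theorem stmt4_general {α β : Type*} [Fintype α] [DecidableEq β]
    (G : SimpleGraph α) (hG : G.Connected) (H : SimpleGraph β) (φ : β ↪ α)
    (hF : TwoEdgeConnected (superpose G H φ))
    (X : Finset β) (hX : ∀ x y : β, H.Adj x y → x ∈ X ∨ y ∈ X)
    (t : ℕ) (ht : X.card = t) (ht1 : 1 ≤ t) :
    ∃ Y : Finset β, Disjoint Y X ∧ Y.card ≤ 2 * (t - 1) ∧
      ∀ x ∈ X ∪ Y, ∀ y ∈ X ∪ Y,
        (bicompGraph (superpose G (restrict H ↑(X ∪ Y)) φ)).connectedComponentMk (φ x) =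
          (bicompGraph (superpose G (restrict H ↑(X ∪ Y)) φ)).connectedComponentMk (φ y) := by
  have hcount : ((bicompGraph (superpose G (restrict H ↑(X ∪ ∅)) φ)).connectedComponentMk ''
      (φ '' X)).ncard ≤ t - 1 + 1 := by
    calc _ ≤ (φ '' ↑X).ncard := Set.ncard_image_le (Set.toFinite _)
      _ = t := by rw [Set.ncard_image_of_injective _ φ.injective, Set.ncard_coe_finset, ht]
      _ = t - 1 + 1 := by omega
  obtain ⟨Y, hYX, hcard, hY⟩ := exists_reachable_of_ncard_le hG hF hX (t - 1)
    (Finset.disjoint_empty_left X) (by simp [IsAttached]) hcount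
  exact ⟨Y, hYX, by simpa using hcard, fun x hx y hy => ConnectedComponent.eq.mpr (hY x hx y hy)⟩

/-- Let `G` be connected and `φ : V(H) ↪ V(G)` injective with `F = G ⊕_φ H` edge
2-connected, and let `X` be a vertex cover of `H` of size `t ≥ 1`. Then there is
`Y ⊆ V(H) \ X` with `|Y| ≤ 2(t-1)` such that, for `H' = H[X ∪ Y]` and
`ψ = φ|_{X ∪ Y}`, all vertices of `ψ(X ∪ Y)` lie in the same biconnected component
of `F' = G ⊕_ψ H'`. -/
theorem stmt4 {α β : Type*} [Fintype α] [Fintype β] [DecidableEq β]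
    (G : SimpleGraph α) (hG : G.Connected) (H : SimpleGraph β) (φ : β ↪ α)
    (hF : TwoEdgeConnected (superpose G H φ))
    (X : Finset β) (hX : ∀ x y : β, H.Adj x y → x ∈ X ∨ y ∈ X)
    (t : ℕ) (ht : X.card = t) (ht1 : 1 ≤ t) :
    ∃ Y : Finset β, Disjoint Y X ∧ Y.card ≤ 2 * (t - 1) ∧
      ∀ x ∈ X ∪ Y, ∀ y ∈ X ∪ Y,
        (bicompGraph (superpose G (restrict H ↑(X ∪ Y)) φ)).connectedComponentMk (φ x) =
          (bicompGraph (superpose G (restrict H ↑(X ∪ Y)) φ)).connectedComponentMk (φ y) :=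
  stmt4_general G hG H φ hF X hX t ht ht1
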